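/- Let B ∈ R^{(n−1)×n} have rank n−1, with smallest nonzero singular value σ_{n−1} > 0. Let v be a unit vector spanning the nullspace of B. Let B̃ = B + δB satisfy ‖δB‖ ≤ σ_{n−1}/3 and suppose ṽ is a unit vector with B̃ṽ = 0 and vᵀṽ ≥ 0. Then ‖ṽ − v‖ ≤ (3√2/σ_{n−1})·‖δB‖. -/

import Mathlib

noncomputable section

/-- The Euclidean norm of a vector in `ℝ^n`. -/
def euclNorm {n : ℕ} (x : Fin n → ℝ) : ℝ := Real.sqrt (∑ i, (x i) ^ 2)

/-- The spectral (operator) norm of a matrix: the supremum of `‖Mx‖` over unit vectors `x`. -/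
def opNorm {l n : ℕ} (M : Matrix (Fin l) (Fin n) ℝ) : ℝ :=
  sSup {c | ∃ x : Fin n → ℝ, euclNorm x = 1 ∧ c = euclNorm (M.mulVec x)}

/-- The smallest singular value of a matrix: the infimum of `‖Mx‖` over unit vectors `x`. -/
def sigMin {l n : ℕ} (M : Matrix (Fin l) (Fin n) ℝ) : ℝ :=
  sInf {c | ∃ x : Fin n → ℝ, euclNorm x = 1 ∧ c = euclNorm (M.mulVec x)}

end

lemma enorm_nonneg' {n : ℕ} (x : Fin n → ℝ) : 0 ≤ euclNorm x := Real.sqrt_nonneg _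

lemma enorm_sq' {n : ℕ} (x : Fin n → ℝ) : euclNorm x ^ 2 = ∑ i, (x i) ^ 2 := by
  rw [euclNorm, Real.sq_sqrt]; positivity

lemma enorm_smul' {n : ℕ} (a : ℝ) (x : Fin n → ℝ) :
    euclNorm (a • x) = |a| * euclNorm x := by
  unfold euclNorm
  simp only [Pi.smul_apply, smul_eq_mul, mul_pow]
  rw [← Finset.mul_sum, Real.sqrt_mul (sq_nonneg a), Real.sqrt_sq_eq_abs]

lemma enorm_neg' {n : ℕ} (x : Fin n → ℝ) : euclNorm (-x) = euclNorm x := by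
  unfold euclNorm; simp

lemma bddAbove_opSet {l n : ℕ} (M : Matrix (Fin l) (Fin n) ℝ) :
    BddAbove {c | ∃ x : Fin n → ℝ, euclNorm x = 1 ∧ c = euclNorm (M.mulVec x)} := by
  refine ⟨Real.sqrt (∑ i, ∑ j, (M i j) ^ 2), ?_⟩
  rintro c ⟨x, hx, rfl⟩
  have hx2 : ∑ j, (x j) ^ 2 = 1 := by
    have := enorm_sq' x; rw [hx] at this; linarith [this.symm]
  rw [euclNorm]
  apply Real.sqrt_le_sqrt
  apply Finset.sum_le_sum
  intro i _
  have := Finset.sum_mul_sq_le_sq_mul_sq Finset.univ (fun j => M i j) x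
  simpa [Matrix.mulVec, dotProduct, hx2] using this

theorem stmt15 {m : ℕ} (B : Matrix (Fin m) (Fin (m + 1)) ℝ)
    (hrank : B.rank = m)
    (v : Fin (m + 1) → ℝ) (hv : B.mulVec v = 0) (hv1 : euclNorm v = 1)
    (σ : ℝ)
    (hσ : σ = sInf {c | ∃ x : Fin (m + 1) → ℝ,
      euclNorm x = 1 ∧ (∑ i, x i * v i) = 0 ∧ c = euclNorm (B.mulVec x)})
    (hσpos : 0 < σ)
    (δB : Matrix (Fin m) (Fin (m + 1)) ℝ) (hδ : opNorm δB ≤ σ / 3)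
    (tv : Fin (m + 1) → ℝ) (htv1 : euclNorm tv = 1)
    (htv : (B + δB).mulVec tv = 0)
    (hsign : 0 ≤ ∑ i, v i * tv i) :
    euclNorm (tv - v) ≤ (3 * Real.sqrt 2 / σ) * opNorm δB := by
  set c := ∑ i, v i * tv i with hc
  have hv2 : ∑ i, (v i) ^ 2 = 1 := by
    have := enorm_sq' v; rw [hv1] at this; linarith
  have htv2 : ∑ i, (tv i) ^ 2 = 1 := by
    have := enorm_sq' tv; rw [htv1] at this; linarith
  -- Cauchy-Schwarz: c ≤ 1
  have hc1 : c ≤ 1 := by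
    have := Finset.sum_mul_sq_le_sq_mul_sq Finset.univ v tv
    rw [hv2, htv2] at this
    nlinarith [this]
  -- the orthogonal component
  set w : Fin (m + 1) → ℝ := tv - c • v with hw
  have hwv : ∑ i, w i * v i = 0 := by
    have h1 : ∀ i, w i * v i = v i * tv i - c * (v i) ^ 2 := by
      intro i; simp only [hw, Pi.sub_apply, Pi.smul_apply, smul_eq_mul]; ring
    simp only [h1, Finset.sum_sub_distrib, ← Finset.mul_sum, hv2, ← hc]
    ring
  have hw2 : ∑ i, (w i) ^ 2 = 1 - c ^ 2 := by
    have : ∀ i, (w i) ^ 2 = (tv i)^2 - 2 * c * (v i * tv i) + c^2 * (v i)^2 := by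
      intro i; simp only [hw, Pi.sub_apply, Pi.smul_apply, smul_eq_mul]; ring
    simp only [this, Finset.sum_add_distrib, Finset.sum_sub_distrib,
      ← Finset.mul_sum, htv2, hv2, ← hc]
    ring
  -- B w = - δB tv
  have hBw : B.mulVec w = -(δB.mulVec tv) := by
    have h1 : B.mulVec tv + δB.mulVec tv = 0 := by
      rw [← Matrix.add_mulVec]; exact htv
    rw [hw, Matrix.mulVec_sub, Matrix.mulVec_smul, hv]
    simp only [smul_zero, sub_zero]
    linear_combination (norm := module) h1
  -- ‖δB tv‖ ≤ opNorm δB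
  have hmem : euclNorm (δB.mulVec tv) ∈
      {c | ∃ x : Fin (m + 1) → ℝ, euclNorm x = 1 ∧ c = euclNorm (δB.mulVec x)} :=
    ⟨tv, htv1, rfl⟩
  have hop : euclNorm (δB.mulVec tv) ≤ opNorm δB :=
    le_csSup (bddAbove_opSet δB) hmem
  have hopnn : 0 ≤ opNorm δB := le_trans (enorm_nonneg' _) hop
  -- σ * ‖w‖ ≤ ‖B w‖
  have hkey : σ ^ 2 * (1 - c ^ 2) ≤ (opNorm δB) ^ 2 := by
    by_cases hw0 : w = 0
    · have : (1 : ℝ) - c ^ 2 = 0 := by rw [← hw2, hw0]; simp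
      rw [this, mul_zero]; positivity
    · have hwn : 0 < euclNorm w := by
        rcases (enorm_nonneg' w).lt_or_eq with h | h
        · exact h
        · exfalso; apply hw0
          have h0 : ∑ i, (w i) ^ 2 = 0 := by
            have := enorm_sq' w; rw [← h] at this; simpa using this.symm
          funext i
          have := Finset.sum_eq_zero_iff_of_nonneg
            (fun i _ => sq_nonneg (w i)) |>.mp h0 i (Finset.mem_univ i)
          have := sq_eq_zero_iff.mp this
          simpa using this
      set x : Fin (m + 1) → ℝ := (euclNorm w)⁻¹ • w with hx
      have hx1 : euclNorm x = 1 := by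
        rw [hx, enorm_smul', abs_of_pos (inv_pos.mpr hwn), inv_mul_cancel₀ hwn.ne']
      have hxv : ∑ i, x i * v i = 0 := by
        simp only [hx, Pi.smul_apply, smul_eq_mul, mul_assoc, ← Finset.mul_sum, hwv,
          mul_zero]
      have hσle : σ ≤ euclNorm (B.mulVec x) := by
        rw [hσ]
        apply csInf_le
        · refine ⟨0, ?_⟩; rintro y ⟨z, _, _, rfl⟩; exact enorm_nonneg' _
        · exact ⟨x, hx1, hxv, rfl⟩
      have hBx : euclNorm (B.mulVec x) = (euclNorm w)⁻¹ * euclNorm (B.mulVec w) := by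
        rw [hx, Matrix.mulVec_smul]
        rw [show (euclNorm w)⁻¹ • B.mulVec w = ((euclNorm w)⁻¹ : ℝ) • B.mulVec w from rfl]
        rw [enorm_smul', abs_of_pos (inv_pos.mpr hwn)]
      have h1 : σ * euclNorm w ≤ euclNorm (B.mulVec w) := by
        rw [hBx] at hσle
        rw [mul_comm]
        calc euclNorm w * σ ≤ euclNorm w * ((euclNorm w)⁻¹ * euclNorm (B.mulVec w)) :=
              mul_le_mul_of_nonneg_left hσle (le_of_lt hwn)
          _ = euclNorm (B.mulVec w) := by field_simp
      have h2 : euclNorm (B.mulVec w) ≤ opNorm δB := by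
        rw [hBw, enorm_neg']; exact hop
      have h3 : σ * euclNorm w ≤ opNorm δB := le_trans h1 h2
      have h4 : (σ * euclNorm w) ^ 2 ≤ (opNorm δB) ^ 2 := by
        apply pow_le_pow_left₀ (by positivity) h3 2
      have h5 : (euclNorm w) ^ 2 = 1 - c ^ 2 := by rw [enorm_sq', hw2]
      nlinarith [h4, h5]
  -- final computation
  have hd2 : euclNorm (tv - v) ^ 2 = 2 - 2 * c := by
    rw [enorm_sq']
    have : ∀ i, ((tv - v) i) ^ 2 = (tv i)^2 - 2 * (v i * tv i) + (v i)^2 := by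
      intro i; simp only [Pi.sub_apply]; ring
    simp only [this, Finset.sum_add_distrib, Finset.sum_sub_distrib,
      ← Finset.mul_sum, htv2, hv2, ← hc]
    ring
  have hcnn : 0 ≤ c := hsign
  have hrhsnn : 0 ≤ 3 * Real.sqrt 2 / σ * opNorm δB := by positivity
  have hrhssq : (3 * Real.sqrt 2 / σ * opNorm δB) ^ 2
      = 18 / σ ^ 2 * (opNorm δB) ^ 2 := by
    rw [mul_pow, div_pow, mul_pow, Real.sq_sqrt (by norm_num : (0:ℝ) ≤ 2)]
    ring
  have hsq : euclNorm (tv - v) ^ 2 ≤ (3 * Real.sqrt 2 / σ * opNorm δB) ^ 2 := by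
    rw [hd2, hrhssq]
    have hσ2 : 0 < σ ^ 2 := by positivity
    rw [div_mul_eq_mul_div, le_div_iff₀ hσ2]
    nlinarith [hkey, hcnn, hc1, sq_nonneg (opNorm δB)]
  calc euclNorm (tv - v) = Real.sqrt (euclNorm (tv - v) ^ 2) :=
        (Real.sqrt_sq (enorm_nonneg' _)).symm
    _ ≤ Real.sqrt ((3 * Real.sqrt 2 / σ * opNorm δB) ^ 2) := Real.sqrt_le_sqrt hsq
    _ = 3 * Real.sqrt 2 / σ * opNorm δB := Real.sqrt_sq hrhsnn
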